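/- arXiv:1010.0014 — 6 statements merged into one kernel-verified Lean document; each statement's English description precedes it below -/
import Mathlib

section
/- Let s_1 < ... < s_K be pairwise relatively prime integers with s_1 ≥ 2, let N, k̃ ∈ ℕ, n ∈ [0,N), S ⊆ [0,N) with |S| ≤ k̃, and x ∈ ℂ^{N-1}. With M' defined as the K × (N-1) matrix whose (j,l) entry is 1 if l ≡ n (mod s_j) and 0 otherwise (columns indexed by [0,N)\{n}), the vectors M'·x and M'·(x − x_S) differ in at most k̃·⌊log_{s_1} N⌋ of their K entries, where x_S agrees with x on S and is zero elsewhere. -/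
open Finset

/-- Lemma 2: M'·x and M'·(x − x_S) differ in at most k̃·⌊log_{s₁} N⌋ entries. -/
theorem stmt2 (K N ktilde : ℕ) (hK : 0 < K) (hN : 0 < N)
    (s : Fin K → ℕ) (hmono : StrictMono s) (h2 : ∀ j, 2 ≤ s j)
    (hcop : ∀ i j, i ≠ j → Nat.Coprime (s i) (s j))
    (n : ℕ) (hn : n < N)
    (S : Finset ℕ) (hSsub : S ⊆ Finset.range N) (hScard : S.card ≤ ktilde)
    (x : ℕ → ℂ) :
    (Finset.univ.filter (fun j : Fin K =>
        (∑ l ∈ (((Finset.range N).erase n).filter (fun l => l % s j = n % s j)), x l)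
          ≠ (∑ l ∈ (((Finset.range N).erase n).filter (fun l => l % s j = n % s j)),
              (x l - if l ∈ S then x l else 0)))).card
      ≤ ktilde * Nat.log (s ⟨0, hK⟩) N := by
  classical
  set s0 := s ⟨0, hK⟩ with hs0
  have hs02 : 2 ≤ s0 := h2 _
  set T : ℕ → Finset (Fin K) :=
    fun l => Finset.univ.filter (fun j : Fin K => l % s j = n % s j) with hT
  -- key bound on fibers
  have key : ∀ l ∈ S.erase n, (T l).card ≤ Nat.log s0 N := by
    intro l hl
    have hlne : l ≠ n := (Finset.mem_erase.1 hl).1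
    have hlN : l < N := Finset.mem_range.1 (hSsub (Finset.mem_of_mem_erase hl))
    set d := max l n - min l n with hd
    have hd0 : 0 < d := by omega
    have hdN : d < N := by omega
    have hdvd : ∀ j ∈ T l, s j ∣ d := by
      intro j hj
      have hj' : l % s j = n % s j := by
        simpa [hT] using hj
      rcases le_total l n with h | h
      · have : s j ∣ n - l := (Nat.modEq_iff_dvd' h).1 hj'
        simpa [hd, max_eq_right h, min_eq_left h] using this
      · have : s j ∣ l - n := (Nat.modEq_iff_dvd' h).1 hj'.symm
        simpa [hd, max_eq_left h, min_eq_right h] using this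
    have hprod : (∏ j ∈ T l, s j) ∣ d := by
      apply Finset.prod_dvd_of_isRelPrime
      · intro i _ j _ hij
        exact Nat.coprime_iff_isRelPrime.1 (hcop i j hij)
      · exact hdvd
    have hpow : s0 ^ (T l).card ≤ ∏ j ∈ T l, s j := by
      apply Finset.pow_card_le_prod
      intro j _
      exact hmono.monotone (Fin.mk_le_of_le_val (Nat.zero_le _))
    have hled : s0 ^ (T l).card ≤ d := hpow.trans (Nat.le_of_dvd hd0 hprod)
    have : (T l).card ≤ Nat.log s0 d :=
      (Nat.le_log_iff_pow_le (by omega) hd0.ne').2 hled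
    exact this.trans (Nat.log_mono_right hdN.le)
  have hsub : (Finset.univ.filter (fun j : Fin K =>
        (∑ l ∈ (((Finset.range N).erase n).filter (fun l => l % s j = n % s j)), x l)
          ≠ (∑ l ∈ (((Finset.range N).erase n).filter (fun l => l % s j = n % s j)),
              (x l - if l ∈ S then x l else 0)))) ⊆ (S.erase n).biUnion T := by
    intro j hj
    simp only [Finset.mem_filter, Finset.mem_univ, true_and] at hj
    have hne : ∑ l ∈ (((Finset.range N).erase n).filter (fun l => l % s j = n % s j)),
        (if l ∈ S then x l else 0) ≠ 0 := by
      intro h0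
      apply hj
      rw [Finset.sum_sub_distrib, h0, sub_zero]
    obtain ⟨l, hl, hlne⟩ := Finset.exists_ne_zero_of_sum_ne_zero hne
    simp only [Finset.mem_filter, Finset.mem_erase, Finset.mem_range] at hl
    have hlS : l ∈ S := by
      by_contra h
      simp [h] at hlne
    refine Finset.mem_biUnion.2 ⟨l, Finset.mem_erase.2 ⟨hl.1.1, hlS⟩, ?_⟩
    simp [hT, hl.2]
  calc _ ≤ ((S.erase n).biUnion T).card := Finset.card_le_card hsub
    _ ≤ ∑ l ∈ S.erase n, (T l).card := Finset.card_biUnion_le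
    _ ≤ ∑ l ∈ S.erase n, Nat.log s0 N := Finset.sum_le_sum key
    _ = (S.erase n).card * Nat.log s0 N := by rw [Finset.sum_const, smul_eq_mul]
    _ ≤ ktilde * Nat.log s0 N :=
        Nat.mul_le_mul_right _ ((Finset.card_erase_le).trans hScard)
end

section
/- Let n, k, s_1 ∈ [0,N) be natural numbers, ε⁻¹ ∈ ℕ⁺, c ∈ ℕ with c ≥ 2, and x ∈ ℂ^N. Let s_1 < ... < s_K be pairwise relatively prime with K = c·(k/ε)·⌊log_{s_1} N⌋ + 1, and let M_n be the K × N matrix whose j-th row has entry 1 in column m iff m ≡ n (mod s_j). Then strictly more than ((c−2)/c)·K of the K entries of M_n·x differ from x_n by at most ε·‖x − x^{opt}_{k/ε}‖₁ / k, where x^{opt}_{k/ε} is a best (k/ε)-term approximation to x. -/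
open Finset

/-- Theorem 2 (Iwen): with K = c·(k/ε)·⌊log_{s₁} N⌋ + 1 pairwise coprime moduli,
more than ((c−2)/c)·K of the entries of M_{s₁,K,n}·x estimate xₙ to within
ε·‖x − x^{opt}_{k/ε}‖₁/k precision.  Here e = ε⁻¹ ∈ ℕ⁺, so k/ε = k·e. -/
theorem stmt3 (N k s1 : ℕ) (n : Fin N) (hk : k < N) (hkpos : 0 < k) (hs1 : s1 < N)
    (e : ℕ) (he : 0 < e) (c : ℕ) (hc : 2 ≤ c)
    (K : ℕ) (hKdef : K = c * (k * e) * Nat.log s1 N + 1) (hK : 0 < K)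
    (s : Fin K → ℕ) (hmono : StrictMono s) (hs1val : s ⟨0, hK⟩ = s1) (h2 : 2 ≤ s1)
    (hcop : ∀ i j, i ≠ j → Nat.Coprime (s i) (s j))
    (x : Fin N → ℂ)
    (T : Finset (Fin N)) (hTcard : T.card = k * e)
    (hTheavy : ∀ i ∈ T, ∀ j ∉ T, ‖x j‖ ≤ ‖x i‖) :
    ((c : ℝ) - 2) / c * K <
      (Finset.univ.filter (fun j : Fin K =>
        ‖(∑ m : Fin N, if (m : ℕ) % s j = (n : ℕ) % s j then x m else 0) - x n‖
          ≤ (∑ m ∈ Finset.univ \ T, ‖x m‖) / (k * e))).card := by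
  classical
  set L := Nat.log s1 N with hL
  set t : ℝ := ∑ m ∈ Finset.univ \ T, ‖x m‖ with ht
  have htnonneg : 0 ≤ t := Finset.sum_nonneg fun m _ => norm_nonneg _
  have hkepos : (0:ℝ) < (k*e : ℕ) := by positivity
  set thr : ℝ := t / (k*e) with hthr
  set err : Fin K → ℝ := fun j =>
    ‖(∑ m : Fin N, if (m : ℕ) % s j = (n : ℕ) % s j then x m else 0) - x n‖
    with herrdef
  -- each s j ≥ s1
  have hsge : ∀ j : Fin K, s1 ≤ s j := by
    intro j
    rw [← hs1val]
    exact hmono.monotone (by simp [Fin.le_def])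
  -- collision counting lemma
  set J : Fin N → Finset (Fin K) := fun m =>
    Finset.univ.filter (fun j : Fin K => (m : ℕ) % s j = (n : ℕ) % s j) with hJ
  have hcollide : ∀ m : Fin N, m ≠ n → (J m).card ≤ L := by
    intro m hm
    have hdvd : (∏ j ∈ J m, (s j : ℤ)) ∣ ((n : ℕ) : ℤ) - ((m : ℕ) : ℤ) := by
      apply Finset.prod_dvd_of_coprime
      · intro i hi j hj hij
        exact Nat.isCoprime_iff_coprime.mpr (hcop i j hij)
      · intro j hj
        have hmem : (m : ℕ) % s j = (n : ℕ) % s j := (Finset.mem_filter.mp hj).2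
        exact (Nat.modEq_iff_dvd).mp hmem
    have hprodcast : (∏ j ∈ J m, (s j : ℤ)) = ((∏ j ∈ J m, s j : ℕ) : ℤ) := by
      push_cast; ring
    rw [hprodcast] at hdvd
    have hdvdnat : (∏ j ∈ J m, s j) ∣ (((n : ℕ) : ℤ) - ((m : ℕ) : ℤ)).natAbs := by
      rw [← Int.natAbs_natCast (∏ j ∈ J m, s j)]
      exact Int.natAbs_dvd_natAbs.mpr hdvd
    have hmn : (m : ℕ) ≠ (n : ℕ) := fun h => hm (Fin.ext h)
    have hpos : 0 < (((n : ℕ) : ℤ) - ((m : ℕ) : ℤ)).natAbs := by omega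
    have hlt : (((n : ℕ) : ℤ) - ((m : ℕ) : ℤ)).natAbs < N := by
      have h1 : (m : ℕ) < N := m.isLt
      have h2 : (n : ℕ) < N := n.isLt
      omega
    have hprodle : (∏ j ∈ J m, s j) ≤ (((n : ℕ) : ℤ) - ((m : ℕ) : ℤ)).natAbs :=
      Nat.le_of_dvd hpos hdvdnat
    have hpow : s1 ^ (J m).card ≤ ∏ j ∈ J m, s j :=
      Finset.pow_card_le_prod _ _ _ fun j _ => hsge j
    have : s1 ^ (J m).card < s1 ^ (L + 1) := by
      calc s1 ^ (J m).card ≤ (((n : ℕ) : ℤ) - ((m : ℕ) : ℤ)).natAbs := le_trans hpow hprodle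
        _ < N := hlt
        _ < s1 ^ (L + 1) := Nat.lt_pow_succ_log_self (by omega) N
    have := (Nat.pow_lt_pow_iff_right (by omega : 1 < s1)).mp this
    omega
  -- rewrite of the error
  have herr : ∀ j : Fin K, err j = ‖
      (∑ m ∈ (Finset.univ.filter
        (fun m : Fin N => (m : ℕ) % s j = (n : ℕ) % s j)).erase n, x m)‖ := by
    intro j
    have h1 : (∑ m : Fin N, if (m : ℕ) % s j = (n : ℕ) % s j then x m else 0) =
        ∑ m ∈ Finset.univ.filter (fun m : Fin N => (m : ℕ) % s j = (n : ℕ) % s j), x m := by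
      rw [Finset.sum_filter]
    have hnmem : n ∈ Finset.univ.filter (fun m : Fin N => (m : ℕ) % s j = (n : ℕ) % s j) := by
      simp
    have h2 := Finset.sum_erase_add _ x hnmem
    simp only [herrdef, h1]
    rw [← h2]
    ring_nf
  -- the tail overlap sums
  set tail : Finset (Fin N) := (Finset.univ \ T).erase n with htail
  set f : Fin K → ℝ := fun j =>
    ∑ m ∈ tail.filter (fun m : Fin N => (m : ℕ) % s j = (n : ℕ) % s j),
      ‖x m‖ with hf
  have hfnonneg : ∀ j, 0 ≤ f j := fun j =>
    Finset.sum_nonneg fun m _ => norm_nonneg _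
  have hfsum : ∑ j : Fin K, f j ≤ (L : ℝ) * t := by
    have hswap : ∑ j : Fin K, f j =
        ∑ m ∈ tail, ((J m).card : ℝ) * ‖x m‖ := by
      simp only [hf, Finset.sum_filter]
      rw [Finset.sum_comm]
      refine Finset.sum_congr rfl fun m _ => ?_
      rw [← Finset.sum_filter, Finset.sum_const, nsmul_eq_mul]
    rw [hswap]
    calc ∑ m ∈ tail, ((J m).card : ℝ) * ‖x m‖
        ≤ ∑ m ∈ tail, (L : ℝ) * ‖x m‖ := by
          refine Finset.sum_le_sum fun m hm => ?_
          have hmn : m ≠ n := (Finset.mem_erase.mp hm).1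
          have := hcollide m hmn
          exact mul_le_mul_of_nonneg_right (by exact_mod_cast this) (norm_nonneg _)
      _ = (L : ℝ) * ∑ m ∈ tail, ‖x m‖ := by rw [Finset.mul_sum]
      _ ≤ (L : ℝ) * t := by
          refine mul_le_mul_of_nonneg_left ?_ (by positivity)
          exact Finset.sum_le_sum_of_subset_of_nonneg (Finset.erase_subset _ _)
            (fun m _ _ => norm_nonneg _)
  -- bad sets
  set bad1 : Finset (Fin K) := Finset.univ.filter
    (fun j : Fin K => ∃ m ∈ T.erase n, (m : ℕ) % s j = (n : ℕ) % s j) with hbad1def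
  have hbad1 : bad1.card ≤ k * e * L := by
    have hsub : bad1 ⊆ (T.erase n).biUnion (fun m => J m) := by
      intro j hj
      obtain ⟨m, hm, hcol⟩ := (Finset.mem_filter.mp hj).2
      exact Finset.mem_biUnion.mpr ⟨m, hm, Finset.mem_filter.mpr ⟨Finset.mem_univ _, hcol⟩⟩
    calc bad1.card ≤ ((T.erase n).biUnion (fun m => J m)).card := Finset.card_le_card hsub
      _ ≤ ∑ m ∈ T.erase n, (J m).card := Finset.card_biUnion_le
      _ ≤ ∑ m ∈ T.erase n, L := Finset.sum_le_sum fun m hm =>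
          hcollide m (Finset.mem_erase.mp hm).1
      _ = (T.erase n).card * L := by rw [Finset.sum_const, smul_eq_mul]
      _ ≤ k * e * L := by
          have := Finset.card_erase_le (a := n) (s := T)
          exact Nat.mul_le_mul_right _ (by omega)
  -- error bounded by tail contribution off bad1
  have herrle : ∀ j : Fin K, j ∉ bad1 → err j ≤ f j := by
    intro j hj
    rw [herr j]
    have hsub : (Finset.univ.filter
        (fun m : Fin N => (m : ℕ) % s j = (n : ℕ) % s j)).erase n ⊆
        tail.filter (fun m : Fin N => (m : ℕ) % s j = (n : ℕ) % s j) := by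
      intro m hm
      obtain ⟨hmn, hmf⟩ := Finset.mem_erase.mp hm
      have hcol : (m : ℕ) % s j = (n : ℕ) % s j := (Finset.mem_filter.mp hmf).2
      have hmT : m ∉ T := by
        intro hmT
        exact hj (Finset.mem_filter.mpr ⟨Finset.mem_univ _,
          ⟨m, Finset.mem_erase.mpr ⟨hmn, hmT⟩, hcol⟩⟩)
      refine Finset.mem_filter.mpr ⟨Finset.mem_erase.mpr ⟨hmn, ?_⟩, hcol⟩
      simp [hmT]
    calc ‖∑ m ∈ _, x m‖ ≤ ∑ m ∈ (Finset.univ.filter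
          (fun m : Fin N => (m : ℕ) % s j = (n : ℕ) % s j)).erase n, ‖x m‖ :=
        norm_sum_le _ _
      _ ≤ f j := Finset.sum_le_sum_of_subset_of_nonneg hsub
          (fun m _ _ => norm_nonneg _)
  -- the bad set
  set B : Finset (Fin K) := Finset.univ.filter (fun j : Fin K => ¬ (err j ≤ thr)) with hBdef
  have hbad2 : (B \ bad1).card ≤ k * e * L := by
    by_cases htz : t = 0
    · have hempty : B \ bad1 = ∅ := by
        apply Finset.eq_empty_of_forall_notMem
        intro j hj
        obtain ⟨hjB, hjb1⟩ := Finset.mem_sdiff.mp hj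
        have hjlt : thr < err j := lt_of_not_ge (Finset.mem_filter.mp hjB).2
        have h1 : err j ≤ f j := herrle j hjb1
        have h2 : f j ≤ (L : ℝ) * t := by
          calc f j ≤ ∑ j : Fin K, f j :=
              Finset.single_le_sum (fun j _ => hfnonneg j) (Finset.mem_univ j)
            _ ≤ (L : ℝ) * t := hfsum
        rw [htz] at h2
        have : thr = 0 := by rw [hthr, htz, zero_div]
        nlinarith
      simp [hempty]
    · have htpos : 0 < t := lt_of_le_of_ne htnonneg (Ne.symm htz)
      have hmark : ((B \ bad1).card : ℝ) * thr ≤ (L : ℝ) * t := by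
        calc ((B \ bad1).card : ℝ) * thr = ∑ _j ∈ B \ bad1, thr := by
              rw [Finset.sum_const, nsmul_eq_mul]
          _ ≤ ∑ j ∈ B \ bad1, f j := by
              refine Finset.sum_le_sum fun j hj => ?_
              obtain ⟨hjB, hjb1⟩ := Finset.mem_sdiff.mp hj
              have hjlt : thr < err j := lt_of_not_ge (Finset.mem_filter.mp hjB).2
              exact le_of_lt (lt_of_lt_of_le hjlt (herrle j hjb1))
          _ ≤ ∑ j : Fin K, f j := Finset.sum_le_sum_of_subset_of_nonneg
              (Finset.subset_univ _) (fun j _ _ => hfnonneg j)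
          _ ≤ (L : ℝ) * t := hfsum
      have hkepos' : (0:ℝ) < (k:ℝ) * e := by positivity
      have hthrpos : 0 < thr := div_pos htpos hkepos'
      have h1 : ((B \ bad1).card : ℝ) ≤ (L : ℝ) * t / thr :=
        (le_div_iff₀ hthrpos).mpr hmark
      have h2 : (L : ℝ) * t / thr = (L : ℝ) * ((k:ℝ) * e) := by
        rw [hthr]
        field_simp
      have hfin : ((B \ bad1).card : ℝ) ≤ ((k * e * L : ℕ) : ℝ) := by
        push_cast
        calc ((B \ bad1).card : ℝ) ≤ (L : ℝ) * ((k:ℝ) * e) := h2 ▸ h1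
          _ = (k:ℝ) * e * L := by ring
      exact_mod_cast hfin
  have hBcard : B.card ≤ 2 * (k * e * L) := by
    have : B ⊆ bad1 ∪ (B \ bad1) := by
      intro j hj
      by_cases h : j ∈ bad1
      · exact Finset.mem_union_left _ h
      · exact Finset.mem_union_right _ (Finset.mem_sdiff.mpr ⟨hj, h⟩)
    calc B.card ≤ (bad1 ∪ (B \ bad1)).card := Finset.card_le_card this
      _ ≤ bad1.card + (B \ bad1).card := Finset.card_union_le _ _
      _ ≤ k * e * L + k * e * L := Nat.add_le_add hbad1 hbad2
      _ = 2 * (k * e * L) := by ring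
  -- the good set
  set G : Finset (Fin K) := Finset.univ.filter (fun j : Fin K => err j ≤ thr) with hGdef
  have hGB : G.card + B.card = K := by
    rw [hGdef, hBdef]
    rw [Finset.card_filter_add_card_filter_not]
    simp
  have hGlarge : K ≤ G.card + 2 * (k * e * L) := by omega
  -- conclude
  have hgoal : ((c : ℝ) - 2) / c * K < G.card := by
    have hc0 : (0:ℝ) < c := by positivity
    rw [div_mul_eq_mul_div, div_lt_iff₀ hc0]
    have hGR : (K : ℝ) ≤ (G.card : ℝ) + 2 * (k * e * L) := by exact_mod_cast hGlarge
    have hKr : (K : ℝ) = c * (k * e) * L + 1 := by exact_mod_cast hKdef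
    have hcr : (2:ℝ) ≤ c := by exact_mod_cast hc
    have hkel : (0:ℝ) ≤ (k:ℝ) * e * L := by positivity
    nlinarith [hGR, hKr, hcr, hkel]
  exact hgoal
end

section
/- Let N ≥ 3·s_1 with N/s_1 ≥ 3, and set λ = ⌈3·ln(N/s_1)/ln ln(N/s_1)⌉. Then the product of the first λ primes satisfies ∏_{i=1}^{λ} p_i ≥ N/s_1. -/
lemma nth_prime_ge (i : ℕ) : i + 1 ≤ Nat.nth Nat.Prime i := by
  induction i with
  | zero => exact le_of_lt (Nat.prime_nth_prime 0).one_lt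
  | succ n ih =>
    have h : Nat.nth Nat.Prime n < Nat.nth Nat.Prime (n+1) :=
      (Nat.nth_lt_nth Nat.infinite_setOf_prime).2 (Nat.lt_succ_self n)
    omega

lemma fact_le_prod_primes (n : ℕ) :
    n.factorial ≤ ∏ i ∈ Finset.range n, Nat.nth Nat.Prime i := by
  rw [← Finset.prod_range_add_one_eq_factorial]
  exact Finset.prod_le_prod' fun i _ => nth_prime_ge i

lemma pow_le_fact_mul_exp (n : ℕ) : (n:ℝ)^n ≤ n.factorial * Real.exp n := by
  induction n with
  | zero => simp
  | succ n ih =>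
    rcases Nat.eq_zero_or_pos n with h0 | hn
    · subst h0
      simpa using Real.one_le_exp (by norm_num : (0:ℝ) ≤ 1)
    · have hn' : (0:ℝ) < n := by exact_mod_cast hn
      have h1 : (1 + 1/(n:ℝ))^n ≤ Real.exp 1 := by
        calc (1 + 1/(n:ℝ))^n ≤ (Real.exp (1/n))^n := by
              apply pow_le_pow_left₀ (by positivity)
              have := Real.add_one_le_exp (1/(n:ℝ)); linarith
          _ = Real.exp 1 := by
              rw [← Real.exp_nat_mul]; congr 1; field_simp
      have h2 : ((n:ℝ)+1)^n ≤ (n:ℝ)^n * Real.exp 1 := by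
        have he : ((n:ℝ)+1)^n = (n:ℝ)^n * (1+1/n)^n := by
          rw [← mul_pow]; congr 1; field_simp
        rw [he]
        exact mul_le_mul_of_nonneg_left h1 (by positivity)
      have hexp : (0:ℝ) < Real.exp 1 := Real.exp_pos 1
      calc ((n+1:ℕ):ℝ)^(n+1) = ((n:ℝ)+1) * ((n:ℝ)+1)^n := by push_cast; ring
        _ ≤ ((n:ℝ)+1) * ((n:ℝ)^n * Real.exp 1) := by
            apply mul_le_mul_of_nonneg_left h2 (by positivity)
        _ ≤ ((n:ℝ)+1) * ((n.factorial * Real.exp n) * Real.exp 1) := by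
            apply mul_le_mul_of_nonneg_left _ (by positivity)
            exact mul_le_mul_of_nonneg_right ih (le_of_lt hexp)
        _ = (n+1).factorial * Real.exp ((n:ℝ)+1) := by
            rw [Real.exp_add, Nat.factorial_succ]; push_cast; ring
        _ = (n+1).factorial * Real.exp ((n+1:ℕ):ℝ) := by push_cast; ring_nf

/-- With λ = ⌈3·ln(N/s₁)/ln ln(N/s₁)⌉, the product of the first λ primes
is at least N/s₁ (given N/s₁ ≥ 3). -/
theorem stmt7 (N s1 : ℕ) (hs1 : 0 < s1) (h3 : 3 * s1 ≤ N)
    (hratio : (3 : ℝ) ≤ (N : ℝ) / s1) :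
    (N : ℝ) / s1 ≤
      ∏ i ∈ Finset.range
        ⌈3 * Real.log ((N : ℝ) / s1) / Real.log (Real.log ((N : ℝ) / s1))⌉₊,
        (Nat.nth Nat.Prime i : ℝ) := by
  set x : ℝ := (N:ℝ)/s1 with hxdef
  have hx0 : (0:ℝ) < x := by linarith
  set L : ℝ := Real.log x with hLdef
  have hL1 : (1:ℝ) < L := by
    refine (Real.lt_log_iff_exp_lt hx0).2 ?_
    calc Real.exp 1 < 2.7182818286 := Real.exp_one_lt_d9
      _ ≤ x := by linarith
  have hL0 : (0:ℝ) < L := by linarith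
  set t : ℝ := Real.log L with htdef
  have ht0 : (0:ℝ) < t := Real.log_pos hL1
  set a : ℝ := 3 * L / t with hadef
  have ha0 : (0:ℝ) < a := by positivity
  set k : ℕ := ⌈a⌉₊ with hkdef
  have hak : a ≤ (k:ℝ) := Nat.le_ceil a
  have hk0 : (0:ℝ) < (k:ℝ) := lt_of_lt_of_le ha0 hak
  -- log computations
  have hlna : Real.log a = Real.log 3 + t - Real.log t := by
    rw [hadef, Real.log_div (by positivity) (ne_of_gt ht0),
        Real.log_mul (by norm_num) (ne_of_gt hL0)]
  have hlt : Real.log t ≤ t - 1 := Real.log_le_sub_one_of_pos ht0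
  have hlog3 : (0:ℝ) < Real.log 3 := Real.log_pos (by norm_num)
  have hlog2 : (0:ℝ) ≤ Real.log 2 := Real.log_nonneg (by norm_num)
  have hlna1 : 1 + Real.log 3 ≤ Real.log a := by rw [hlna]; linarith
  have hlk : Real.log a ≤ Real.log (k:ℝ) := Real.log_le_log ha0 hak
  -- key inequality: t ≤ 3 (log a - 1)
  have hl32 : Real.log (2*t/3) = Real.log t - (Real.log 3 - Real.log 2) := by
    rw [show (2*t/3 : ℝ) = t / (3/2) by ring,
        Real.log_div (ne_of_gt ht0) (by norm_num),
        Real.log_div (by norm_num) (by norm_num)]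
  have h23 : Real.log (2*t/3) ≤ 2*t/3 - 1 :=
    Real.log_le_sub_one_of_pos (by positivity)
  have key1 : t ≤ 3 * (Real.log a - 1) := by
    rw [hlna]; linarith
  -- L ≤ k (log k - 1)
  have key2 : L ≤ (k:ℝ) * (Real.log (k:ℝ) - 1) := by
    have h1 : L ≤ a * (Real.log a - 1) := by
      rw [hadef, div_mul_eq_mul_div, le_div_iff₀ ht0]
      nlinarith [key1, hL0.le]
    have h2 : a * (Real.log a - 1) ≤ (k:ℝ) * (Real.log (k:ℝ) - 1) := by
      apply mul_le_mul hak (by linarith) (by linarith) hk0.le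
    linarith
  -- finish
  have hxexp : x = Real.exp L := (Real.exp_log hx0).symm
  have hpowk : (k:ℝ)^k = Real.exp ((k:ℝ) * Real.log (k:ℝ)) := by
    conv_lhs => rw [← Real.exp_log hk0]
    rw [← Real.exp_nat_mul]
  have h5 : x * Real.exp (k:ℝ) ≤ (k:ℝ)^k := by
    rw [hxexp, ← Real.exp_add, hpowk]
    apply Real.exp_le_exp.2
    nlinarith [key2]
  have h6 : x ≤ (k.factorial : ℝ) := by
    have := pow_le_fact_mul_exp k
    have hep : (0:ℝ) < Real.exp (k:ℝ) := Real.exp_pos _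
    have : x * Real.exp (k:ℝ) ≤ (k.factorial : ℝ) * Real.exp (k:ℝ) := by linarith
    exact le_of_mul_le_mul_right this hep
  have h7 : ((k.factorial : ℕ) : ℝ) ≤ ∏ i ∈ Finset.range k, (Nat.nth Nat.Prime i : ℝ) := by
    rw [← Nat.cast_prod]
    exact_mod_cast fact_le_prod_primes k
  exact le_trans h6 h7
end

section
/- Let x ∈ ℂ^N, fix k ∈ ℕ with 2k ≤ N, and let S^{opt}_k be a set of indices of the k largest-magnitude entries of x. Suppose y ∈ ℂ^N satisfies |y_ω − x_ω| ≤ δ for all ω, and let S be a set of indices of the 2k largest-magnitude entries of y. Then for every ω ∈ S^{opt}_k \ S and every ω̃ ∈ S \ S^{opt}_k, we have |x_{ω̃}| ≥ |x_ω| − 2δ and |x_ω| ≤ |x_{ω_k}| + 2δ, where ω_k is an index of the k-th largest magnitude entry of x. Moreover |S \ S^{opt}_k| ≥ 2·|S^{opt}_k \ S|. -/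
open Finset

/-- If y approximates x entrywise to within δ, S is a top-2k set for y and S^opt a
top-k set for x, then entries indexed by the symmetric difference have magnitude close
to the k-th largest magnitude of x, and |S \ S^opt| ≥ 2·|S^opt \ S|. -/
theorem stmt13 (N k : ℕ) (h2k : 2 * k ≤ N) (x y : Fin N → ℂ) (δ : ℝ) (hδ : 0 ≤ δ)
    (hy : ∀ ω, ‖y ω - x ω‖ ≤ δ)
    (Sopt : Finset (Fin N)) (hSoptcard : Sopt.card = k)
    (hSoptheavy : ∀ i ∈ Sopt, ∀ j ∉ Sopt, ‖x j‖ ≤ ‖x i‖)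
    (S : Finset (Fin N)) (hScard : S.card = 2 * k)
    (hSheavy : ∀ i ∈ S, ∀ j ∉ S, ‖y j‖ ≤ ‖y i‖)
    (ωk : Fin N) (hωk : ωk ∈ Sopt) (hωkmin : ∀ i ∈ Sopt, ‖x ωk‖ ≤ ‖x i‖) :
    (∀ ω ∈ Sopt \ S, ∀ ω' ∈ S \ Sopt,
        ‖x ω‖ - 2 * δ ≤ ‖x ω'‖ ∧
          ‖x ω‖ ≤ ‖x ωk‖ + 2 * δ) ∧
      2 * (Sopt \ S).card ≤ (S \ Sopt).card := by
  constructor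
  · intro ω hω ω' hω'
    simp only [Finset.mem_sdiff] at hω hω'
    have hyx : ∀ z, ‖x z‖ ≤ ‖y z‖ + δ := fun z => by
      have h := norm_sub_norm_le (x z) (y z)
      have h2 := hy z
      rw [show y z - x z = -(x z - y z) by ring] at h2
      simp only [norm_neg] at *
      linarith
    have hxy : ∀ z, ‖y z‖ ≤ ‖x z‖ + δ := fun z => by
      have h := norm_sub_norm_le (y z) (x z)
      have h2 := hy z
      linarith
    have h1 : ‖y ω‖ ≤ ‖y ω'‖ := hSheavy ω' hω'.1 ω hω.2
    have key : ‖x ω‖ ≤ ‖x ω'‖ + 2 * δ := by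
      have := hyx ω; have := hxy ω'; linarith
    have h2 : ‖x ω'‖ ≤ ‖x ωk‖ := hSoptheavy ωk hωk ω' hω'.2
    constructor <;> linarith
  · have h2 : (S \ Sopt).card + (S ∩ Sopt).card = 2 * k := by
      rw [Finset.card_sdiff_add_card_inter, hScard]
    have h3 : (Sopt \ S).card + (Sopt ∩ S).card = k := by
      rw [Finset.card_sdiff_add_card_inter, hSoptcard]
    have h4 : (Sopt ∩ S).card = (S ∩ Sopt).card := by rw [Finset.inter_comm]
    omega
end

section
/- Let x ∈ ℂ^N, k ∈ ℕ with 2k ≤ N, and δ ≥ 0. Suppose y ∈ ℂ^N satisfies |y_ω − x_ω| ≤ √2·δ for all ω. Let S index 2k largest-magnitude entries of y, and define z ∈ ℂ^N by z_ω = y_ω for ω ∈ S and 0 otherwise. Then ‖x − z‖₂ ≤ ‖x − x^{opt}_k‖₂ + 22·√k·δ, where x^{opt}_k is a best k-term approximation to x. -/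
open Finset

set_option maxHeartbeats 1000000 in
/-- Core error bound: entrywise √2·δ-accurate estimates, followed by keeping the top
2k estimated entries, yield a k-term-near-optimal approximation:
‖x − z‖₂ ≤ ‖x − x^{opt}_k‖₂ + 22·√k·δ. -/
theorem stmt14 (N k : ℕ) (h2k : 2 * k ≤ N) (x y : Fin N → ℂ) (δ : ℝ) (hδ : 0 ≤ δ)
    (hy : ∀ ω, ‖y ω - x ω‖ ≤ Real.sqrt 2 * δ)
    (S : Finset (Fin N)) (hScard : S.card = 2 * k)
    (hSheavy : ∀ i ∈ S, ∀ j ∉ S, ‖y j‖ ≤ ‖y i‖)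
    (Sopt : Finset (Fin N)) (hSoptcard : Sopt.card = k)
    (hSoptheavy : ∀ i ∈ Sopt, ∀ j ∉ Sopt, ‖x j‖ ≤ ‖x i‖)
    (z : Fin N → ℂ) (hz : ∀ ω, z ω = if ω ∈ S then y ω else 0) :
    Real.sqrt (∑ ω, ‖x ω - z ω‖ ^ 2)
      ≤ Real.sqrt (∑ ω ∈ Finset.univ \ Sopt, ‖x ω‖ ^ 2)
          + 22 * Real.sqrt k * δ := by
  rcases Nat.eq_zero_or_pos k with hk0 | hk
  · subst hk0
    have hS : S = ∅ := Finset.card_eq_zero.mp (by simpa using hScard)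
    have hSo : Sopt = ∅ := Finset.card_eq_zero.mp (by simpa using hSoptcard)
    simp [hz, hS, hSo]
  · -- notation
    set ε : ℝ := Real.sqrt 2 * δ with hεdef
    have hε0 : 0 ≤ ε := mul_nonneg (Real.sqrt_nonneg 2) hδ
    have hε2 : ε ^ 2 = 2 * δ ^ 2 := by
      rw [hεdef, mul_pow, Real.sq_sqrt (by norm_num : (0:ℝ) ≤ 2)]
    have hεle : ε ≤ 2 * δ := by
      have h1 : Real.sqrt 2 ≤ 2 := by
        nlinarith [Real.sq_sqrt (by norm_num : (0:ℝ) ≤ 2), Real.sqrt_nonneg 2]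
      calc ε = Real.sqrt 2 * δ := hεdef
        _ ≤ 2 * δ := mul_le_mul_of_nonneg_right h1 hδ
    have ha0 : ∀ ω, (0:ℝ) ≤ ‖x ω‖ := fun ω => norm_nonneg _
    have hba : ∀ ω, ‖x ω‖ ≤ ‖y ω‖ + ε ∧
        ‖y ω‖ ≤ ‖x ω‖ + ε := by
      intro ω
      have h1 : |‖y ω‖ - ‖x ω‖| ≤ ε :=
        le_trans (abs_norm_sub_norm_le _ _) (hy ω)
      have h2 := abs_le.mp h1
      constructor <;> linarith [h2.1, h2.2]
    have hSne : S.Nonempty := by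
      rw [← Finset.card_pos, hScard]; omega
    obtain ⟨i0, hi0S, hi0min⟩ := S.exists_min_image (fun ω => ‖y ω‖) hSne
    set m : ℝ := ‖y i0‖ with hm
    set c : ℝ := max (m - ε) 0 with hc
    have hc0 : 0 ≤ c := le_max_right _ _
    set T : Finset (Fin N) := (univ \ S) ∩ Sopt with hT
    set W : Finset (Fin N) := (univ \ S) \ Sopt with hW
    -- cardinalities
    have hTk : T.card ≤ k := by
      have h : T ⊆ Sopt := Finset.inter_subset_right
      have := Finset.card_le_card h
      omega
    have hSTk : k ≤ (S \ Sopt).card := by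
      have h1 := Finset.le_card_sdiff Sopt S
      omega
    -- pointwise bounds
    have hTa : ∀ t ∈ T, ‖x t‖ ≤ c + 2 * ε := by
      intro t ht
      have htS : t ∉ S := by
        have := (Finset.mem_inter.mp ht).1
        exact (Finset.mem_sdiff.mp this).2
      have h1 : ‖y t‖ ≤ m := hSheavy i0 hi0S t htS
      have h2 := (hba t).1
      have h3 : m - ε ≤ c := le_max_left _ _
      linarith
    have hUa : ∀ u ∈ S \ Sopt, c ≤ ‖x u‖ := by
      intro u hu
      have huS : u ∈ S := (Finset.mem_sdiff.mp hu).1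
      have h1 : m ≤ ‖y u‖ := hi0min u huS
      have h2 := (hba u).2
      exact max_le (by linarith) (ha0 u)
    -- sum splitting
    have hsplit1 : ∑ ω, ‖x ω - z ω‖ ^ 2
        = ∑ ω ∈ univ \ S, ‖x ω‖ ^ 2
          + ∑ ω ∈ S, ‖x ω - y ω‖ ^ 2 := by
      rw [← Finset.sum_sdiff (Finset.subset_univ S)]
      congr 1
      · refine Finset.sum_congr rfl fun ω hω => ?_
        rw [hz ω, if_neg (Finset.mem_sdiff.mp hω).2, sub_zero]
      · refine Finset.sum_congr rfl fun ω hω => ?_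
        rw [hz ω, if_pos hω]
    have hsplit2 : ∑ ω ∈ univ \ S, ‖x ω‖ ^ 2
        = ∑ ω ∈ T, ‖x ω‖ ^ 2 + ∑ ω ∈ W, ‖x ω‖ ^ 2 :=
      (Finset.sum_inter_add_sum_sdiff (univ \ S) Sopt _).symm
    -- bounds on the pieces
    have hA : ∑ ω ∈ S, ‖x ω - y ω‖ ^ 2 ≤ (2 * k : ℝ) * (2 * δ ^ 2) := by
      have hpt : ∀ ω ∈ S, ‖x ω - y ω‖ ^ 2 ≤ 2 * δ ^ 2 := by
        intro ω _
        have h1 : ‖x ω - y ω‖ ≤ ε := by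
          rw [norm_sub_rev]; exact hy ω
        calc ‖x ω - y ω‖ ^ 2 ≤ ε ^ 2 :=
              pow_le_pow_left₀ (norm_nonneg _) h1 2
          _ = 2 * δ ^ 2 := hε2
      have := Finset.sum_le_card_nsmul S _ _ hpt
      rw [hScard] at this
      calc ∑ ω ∈ S, ‖x ω - y ω‖ ^ 2 ≤ (2 * k) • (2 * δ ^ 2) := this
        _ = (2 * k : ℝ) * (2 * δ ^ 2) := by push_cast [nsmul_eq_mul]; ring
    have hC : ∑ t ∈ T, ‖x t‖ ^ 2 ≤ (T.card : ℝ) * (c + 2 * ε) ^ 2 := by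
      have := Finset.sum_le_card_nsmul T (fun t => ‖x t‖ ^ 2) ((c + 2 * ε) ^ 2)
        (fun t ht => pow_le_pow_left₀ (ha0 t) (hTa t ht) 2)
      simpa [nsmul_eq_mul] using this
    have hQ : ((S \ Sopt).card : ℝ) * c ^ 2 ≤ ∑ u ∈ S \ Sopt, ‖x u‖ ^ 2 := by
      have := Finset.card_nsmul_le_sum (S \ Sopt) (fun u => ‖x u‖ ^ 2) (c ^ 2)
        (fun u hu => pow_le_pow_left₀ hc0 (hUa u hu) 2)
      simpa [nsmul_eq_mul] using this
    have hdisj : Disjoint W (S \ Sopt) := by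
      rw [Finset.disjoint_left]
      intro ω hω hω'
      exact (Finset.mem_sdiff.mp (Finset.mem_sdiff.mp hω).1).2 (Finset.mem_sdiff.mp hω').1
    have hPQ : ∑ ω ∈ W, ‖x ω‖ ^ 2 + ∑ u ∈ S \ Sopt, ‖x u‖ ^ 2
        ≤ ∑ ω ∈ univ \ Sopt, ‖x ω‖ ^ 2 := by
      rw [← Finset.sum_union hdisj]
      apply Finset.sum_le_sum_of_subset_of_nonneg
      · intro ω hω
        rcases Finset.mem_union.mp hω with h | h
        · exact Finset.mem_sdiff.mpr ⟨Finset.mem_univ _, (Finset.mem_sdiff.mp h).2⟩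
        · exact Finset.mem_sdiff.mpr ⟨Finset.mem_univ _, (Finset.mem_sdiff.mp h).2⟩
      · intro ω _ _; positivity
    -- abbreviate
    set E : ℝ := Real.sqrt (∑ ω ∈ univ \ Sopt, ‖x ω‖ ^ 2) with hE
    set sk : ℝ := Real.sqrt k with hsk
    have hE0 : 0 ≤ E := Real.sqrt_nonneg _
    have hsk0 : 0 ≤ sk := Real.sqrt_nonneg _
    have hE2 : E ^ 2 = ∑ ω ∈ univ \ Sopt, ‖x ω‖ ^ 2 :=
      Real.sq_sqrt (Finset.sum_nonneg fun ω _ => by positivity)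
    have hsk2 : sk ^ 2 = (k : ℝ) := Real.sq_sqrt (Nat.cast_nonneg k)
    have hnTk : (T.card : ℝ) ≤ (k : ℝ) := by exact_mod_cast hTk
    have hP0 : 0 ≤ ∑ ω ∈ W, ‖x ω‖ ^ 2 :=
      Finset.sum_nonneg fun ω _ => by positivity
    -- key: T.card * c^2 ≤ sum over S \ Sopt
    have hQ' : (T.card : ℝ) * c ^ 2 ≤ ∑ u ∈ S \ Sopt, ‖x u‖ ^ 2 := by
      refine le_trans ?_ hQ
      have : (T.card : ℝ) ≤ ((S \ Sopt).card : ℝ) := by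
        exact_mod_cast le_trans hTk hSTk
      exact mul_le_mul_of_nonneg_right this (sq_nonneg c)
    have hQE : (T.card : ℝ) * c ^ 2 ≤ E ^ 2 := by
      rw [hE2]; exact le_trans hQ' (by linarith)
    have hprod : (T.card : ℝ) * c ≤ sk * E := by
      have h1 : ((T.card : ℝ) * c) ^ 2 ≤ (sk * E) ^ 2 := by
        have he : ((T.card : ℝ) * c) ^ 2 = (T.card : ℝ) * ((T.card : ℝ) * c ^ 2) := by ring
        rw [he, mul_pow, hsk2]
        exact mul_le_mul hnTk hQE (mul_nonneg (Nat.cast_nonneg _) (sq_nonneg c)) (Nat.cast_nonneg k)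
      have h2 : (0:ℝ) ≤ (T.card : ℝ) * c := mul_nonneg (Nat.cast_nonneg _) hc0
      have h3 : (0:ℝ) ≤ sk * E := mul_nonneg hsk0 hE0
      calc (T.card : ℝ) * c = Real.sqrt (((T.card : ℝ) * c) ^ 2) := (Real.sqrt_sq h2).symm
        _ ≤ Real.sqrt ((sk * E) ^ 2) := Real.sqrt_le_sqrt h1
        _ = sk * E := Real.sqrt_sq h3
    -- products needed for the final estimate
    have h4 : ε * ((T.card : ℝ) * c) ≤ ε * (sk * E) :=
      mul_le_mul_of_nonneg_left hprod hε0
    have h5 : ε * (sk * E) ≤ (2 * δ) * (sk * E) :=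
      mul_le_mul_of_nonneg_right hεle (mul_nonneg hsk0 hE0)
    have h6 : (T.card : ℝ) * ε ^ 2 ≤ (k : ℝ) * (2 * δ ^ 2) := by
      rw [hε2]; exact mul_le_mul_of_nonneg_right hnTk (by nlinarith [sq_nonneg δ])
    have hskδE : 0 ≤ sk * δ * E := mul_nonneg (mul_nonneg hsk0 hδ) hE0
    have hkδ2 : 0 ≤ (k : ℝ) * δ ^ 2 := mul_nonneg (Nat.cast_nonneg _) (sq_nonneg _)
    -- main square estimate
    have hmain : ∑ ω, ‖x ω - z ω‖ ^ 2 ≤ (E + 22 * sk * δ) ^ 2 := by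
      rw [hsplit1, hsplit2]
      have hexp : (T.card : ℝ) * (c + 2 * ε) ^ 2
          = (T.card : ℝ) * c ^ 2 + 4 * (ε * ((T.card : ℝ) * c)) + 4 * ((T.card : ℝ) * ε ^ 2) := by
        ring
      have hrhs : (E + 22 * sk * δ) ^ 2
          = E ^ 2 + 44 * (sk * δ * E) + 484 * (sk ^ 2 * δ ^ 2) := by ring
      rw [hsk2] at hrhs
      linarith [hA, hC, hQ', hPQ, h4, h5, h6, hE2, hskδE, hkδ2, hP0]
    calc Real.sqrt (∑ ω, ‖x ω - z ω‖ ^ 2)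
        ≤ Real.sqrt ((E + 22 * sk * δ) ^ 2) := Real.sqrt_le_sqrt hmain
      _ = E + 22 * sk * δ := Real.sqrt_sq (by nlinarith [mul_nonneg hsk0 hδ])
      _ = Real.sqrt (∑ ω ∈ univ \ Sopt, ‖x ω‖ ^ 2) + 22 * Real.sqrt k * δ := by
          rw [hE, hsk]
end

section
/- Let k, ε⁻¹, N ∈ ℕ with N > k/ε ≥ 2, let s_1 < ... < s_K be pairwise relatively prime with s_1 = k/ε and K = c·(k/ε)·⌊log_{s_1} N⌋ + 1 for a constant integer c ≥ 4. Then for every subset S ⊆ [0,N) and every x ∈ ℂ^N, there exists a subset S̃ of at most ⌈log_{c/2}(|S|+1)⌉ of the s_j values such that for all n ∈ S, min over s_{j_h} ∈ S̃ of |(row r_{j_h, n mod s_{j_h}})·x − x_n| ≤ ε·‖x − x^{opt}_{k/ε}‖₁/k, where r_{j,h} ∈ {0,1}^N has a 1 in position m iff m ≡ h (mod s_j). -/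
open Finset

/-- Corollary 1 (existence): there is a subset S̃ of at most ⌈log_{c/2}(|S|+1)⌉ of the
moduli s_j such that every entry xₙ, n ∈ S, is estimated to within
ε·‖x − x^{opt}_{k/ε}‖₁/k by some row r_{j, n mod s_j} with j ∈ S̃
(here e = ε⁻¹ ∈ ℕ, so k/ε = k·e). -/
theorem stmt18 (N k e : ℕ) (he : 0 < e) (hk : 0 < k)
    (hke2 : 2 ≤ k * e) (hkeN : k * e < N)
    (c : ℕ) (hc : 4 ≤ c)
    (K : ℕ) (hKdef : K = c * (k * e) * Nat.log (k * e) N + 1) (hK : 0 < K)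
    (s : Fin K → ℕ) (hmono : StrictMono s) (hs1 : s ⟨0, hK⟩ = k * e)
    (hcop : ∀ i j, i ≠ j → Nat.Coprime (s i) (s j))
    (S : Finset (Fin N)) (x : Fin N → ℂ)
    (T : Finset (Fin N)) (hTcard : T.card = k * e)
    (hTheavy : ∀ i ∈ T, ∀ j ∉ T, ‖x j‖ ≤ ‖x i‖) :
    ∃ J : Finset (Fin K),
      J.card ≤ ⌈Real.log ((S.card : ℝ) + 1) / Real.log ((c : ℝ) / 2)⌉₊ ∧
        ∀ n ∈ S, ∃ j ∈ J,
          ‖(∑ m : Fin N, if (m : ℕ) % s j = (n : ℕ) % s j then x m else 0) - x n‖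
            ≤ (∑ m ∈ Finset.univ \ T, ‖x m‖) / (k * e) := by
  classical
  set L := Nat.log (k * e) N with hLdef
  have hke1 : 1 < k * e := lt_of_lt_of_le one_lt_two hke2
  have hsge : ∀ j, k * e ≤ s j := by
    intro j
    rw [← hs1]
    exact hmono.monotone (by simp [Fin.le_def])
  -- collision counting lemma
  have hcoll : ∀ n m : Fin N, m ≠ n →
      (univ.filter (fun j : Fin K => (m : ℕ) % s j = (n : ℕ) % s j)).card ≤ L := by
    intro n m hmn
    set F := univ.filter (fun j : Fin K => (m : ℕ) % s j = (n : ℕ) % s j) with hF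
    set d : ℕ := (m : ℕ) - (n : ℕ) + ((n : ℕ) - (m : ℕ)) with hd
    have hmn' : (m : ℕ) ≠ (n : ℕ) := fun h => hmn (Fin.ext h)
    have hd0 : d ≠ 0 := by omega
    have hdN : d < N := by have := m.isLt; have := n.isLt; omega
    have hdvd : ∀ j ∈ F, s j ∣ d := by
      intro j hj
      rw [hF, mem_filter] at hj
      have h := hj.2
      rcases le_total (m : ℕ) (n : ℕ) with hle | hle
      · have h1 : s j ∣ (n : ℕ) - (m : ℕ) := (Nat.modEq_iff_dvd' hle).mp h
        have hd' : d = (n : ℕ) - (m : ℕ) := by omega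
        rw [hd']; exact h1
      · have h1 : s j ∣ (m : ℕ) - (n : ℕ) := (Nat.modEq_iff_dvd' hle).mp h.symm
        have hd' : d = (m : ℕ) - (n : ℕ) := by omega
        rw [hd']; exact h1
    have hprodZ : (∏ j ∈ F, (s j : ℤ)) ∣ (d : ℤ) := by
      apply Finset.prod_dvd_of_coprime
      · intro i hi j hj hij
        exact Nat.isCoprime_iff_coprime.mpr (hcop i j hij)
      · intro i hi
        exact Int.natCast_dvd_natCast.mpr (hdvd i hi)
    have hprod : (∏ j ∈ F, s j) ∣ d := by
      rw [← Nat.cast_prod] at hprodZ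
      exact_mod_cast hprodZ
    have hpow : (k * e) ^ F.card ≤ ∏ j ∈ F, s j :=
      Finset.pow_card_le_prod F s (k * e) (fun j _ => hsge j)
    have hled : (k * e) ^ F.card ≤ d :=
      le_trans hpow (Nat.le_of_dvd (Nat.pos_of_ne_zero hd0) hprod)
    have := (Nat.le_log_iff_pow_le hke1 hd0).mpr hled
    exact le_trans this (Nat.log_mono_right (le_of_lt hdN))
  set W := ∑ m ∈ Finset.univ \ T, ‖(x m)‖ with hW
  have hW0 : 0 ≤ W := Finset.sum_nonneg (fun m _ => norm_nonneg _)
  have hkepos : (0 : ℝ) < (k : ℝ) * e := by positivity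
  set Bnd : ℝ := W / ((k : ℝ) * e) with hBnd
  have hBnd0 : 0 ≤ Bnd := div_nonneg hW0 (le_of_lt hkepos)
  set Good : Fin N → Fin K → Prop := fun n j =>
    ‖((∑ m : Fin N, if (m : ℕ) % s j = (n : ℕ) % s j then x m else 0) - x n)‖
      ≤ Bnd with hGood
  -- Theorem 2: few bad moduli for each n
  have hbad : ∀ n : Fin N, (univ.filter (fun j => ¬ Good n j)).card ≤ 2 * (k * e) * L := by
    intro n
    set D := (Finset.univ \ T).erase n with hD
    set lightsum : Fin K → ℝ := fun j =>
      ∑ m ∈ D, if (m : ℕ) % s j = (n : ℕ) % s j then ‖(x m)‖ else 0 with hls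
    have hls0 : ∀ j, 0 ≤ lightsum j :=
      fun j => Finset.sum_nonneg (fun m _ => by positivity)
    have hlsW : ∀ j, lightsum j ≤ W := by
      intro j
      calc lightsum j ≤ ∑ m ∈ D, ‖(x m)‖ :=
            Finset.sum_le_sum (fun m _ => by split <;> [exact le_rfl; positivity])
      _ ≤ W := Finset.sum_le_sum_of_subset_of_nonneg (Finset.erase_subset _ _)
            (fun m _ _ => by positivity)
    set Hs := (T.erase n).biUnion
      (fun m => univ.filter (fun j : Fin K => (m : ℕ) % s j = (n : ℕ) % s j)) with hHs
    set Ls := univ.filter (fun j : Fin K => Bnd < lightsum j) with hLs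
    have hsubset : univ.filter (fun j => ¬ Good n j) ⊆ Hs ∪ Ls := by
      intro j hj
      rw [mem_filter] at hj
      by_contra hnot
      rw [Finset.mem_union, not_or] at hnot
      obtain ⟨hnH, hnL⟩ := hnot
      apply hj.2
      have key : (∑ m : Fin N, if (m : ℕ) % s j = (n : ℕ) % s j then x m else 0) - x n
          = ∑ m ∈ (univ.filter (fun m : Fin N => (m : ℕ) % s j = (n : ℕ) % s j)).erase n,
              x m := by
        have hnmem : n ∈ univ.filter (fun m : Fin N => (m : ℕ) % s j = (n : ℕ) % s j) :=
          Finset.mem_filter.mpr ⟨Finset.mem_univ n, rfl⟩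
        rw [Finset.sum_erase_eq_sub hnmem, ← Finset.sum_filter]
      have hsub2 : (univ.filter (fun m : Fin N => (m : ℕ) % s j = (n : ℕ) % s j)).erase n
          ⊆ D.filter (fun m : Fin N => (m : ℕ) % s j = (n : ℕ) % s j) := by
        intro m hm
        rw [Finset.mem_erase, Finset.mem_filter] at hm
        obtain ⟨hmne, _, hmc⟩ := hm
        have hmT : m ∉ T := by
          intro hmT
          apply hnH
          rw [hHs, Finset.mem_biUnion]
          exact ⟨m, Finset.mem_erase.mpr ⟨hmne, hmT⟩,
            Finset.mem_filter.mpr ⟨Finset.mem_univ _, hmc⟩⟩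
        exact Finset.mem_filter.mpr ⟨Finset.mem_erase.mpr ⟨hmne,
          Finset.mem_sdiff.mpr ⟨Finset.mem_univ _, hmT⟩⟩, hmc⟩
      rw [hGood]
      simp only []
      rw [key]
      calc ‖(∑ m ∈ (univ.filter (fun m : Fin N =>
              (m : ℕ) % s j = (n : ℕ) % s j)).erase n, x m)‖
          ≤ ∑ m ∈ (univ.filter (fun m : Fin N =>
              (m : ℕ) % s j = (n : ℕ) % s j)).erase n, ‖(x m)‖ :=
            norm_sum_le _ _
        _ ≤ ∑ m ∈ D.filter (fun m : Fin N => (m : ℕ) % s j = (n : ℕ) % s j),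
              ‖(x m)‖ :=
            Finset.sum_le_sum_of_subset_of_nonneg hsub2 (fun m _ _ => by positivity)
        _ = lightsum j := by rw [hls]; rw [Finset.sum_filter]
        _ ≤ Bnd := not_lt.mp (by simpa [hLs] using hnL)
    have hHcard : Hs.card ≤ (k * e) * L := by
      calc Hs.card ≤ ∑ m ∈ T.erase n,
            (univ.filter (fun j : Fin K => (m : ℕ) % s j = (n : ℕ) % s j)).card :=
            Finset.card_biUnion_le
      _ ≤ ∑ m ∈ T.erase n, L :=
            Finset.sum_le_sum (fun m hm => hcoll n m (Finset.mem_erase.mp hm).1)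
      _ = (T.erase n).card * L := by rw [Finset.sum_const, smul_eq_mul]
      _ ≤ (k * e) * L := by
            have := Finset.card_erase_le (a := n) (s := T)
            exact Nat.mul_le_mul_right _ (by omega)
    have hLcard : Ls.card ≤ (k * e) * L := by
      by_cases hWz : W = 0
      · have : Ls = ∅ := by
          rw [hLs, Finset.filter_eq_empty_iff]
          intro j _
          rw [not_lt]
          calc lightsum j ≤ W := hlsW j
          _ = 0 := hWz
          _ = Bnd := by rw [hBnd, hWz, zero_div]
        simp [this]
      · have hWpos : 0 < W := lt_of_le_of_ne hW0 (Ne.symm hWz)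
        have h1 : (Ls.card : ℝ) * Bnd ≤ ∑ j ∈ Ls, lightsum j := by
          have := Finset.card_nsmul_le_sum Ls lightsum Bnd
            (fun j hj => le_of_lt (Finset.mem_filter.mp hj).2)
          simpa [nsmul_eq_mul] using this
        have h2 : ∑ j ∈ Ls, lightsum j ≤ ∑ j : Fin K, lightsum j :=
          Finset.sum_le_sum_of_subset_of_nonneg (Finset.subset_univ _)
            (fun j _ _ => hls0 j)
        have h3 : ∑ j : Fin K, lightsum j ≤ (L : ℝ) * W := by
          rw [hls]
          rw [Finset.sum_comm]
          calc ∑ m ∈ D, ∑ j : Fin K,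
                (if (m : ℕ) % s j = (n : ℕ) % s j then ‖(x m)‖ else 0)
              = ∑ m ∈ D, ((univ.filter (fun j : Fin K =>
                  (m : ℕ) % s j = (n : ℕ) % s j)).card : ℝ) * ‖(x m)‖ := by
                refine Finset.sum_congr rfl (fun m _ => ?_)
                rw [← Finset.sum_filter, Finset.sum_const, nsmul_eq_mul]
            _ ≤ ∑ m ∈ D, (L : ℝ) * ‖(x m)‖ := by
                refine Finset.sum_le_sum (fun m hm => ?_)
                have hmn : m ≠ n := (Finset.mem_erase.mp hm).1
                have := hcoll n m hmn
                have hcast : ((univ.filter (fun j : Fin K =>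
                    (m : ℕ) % s j = (n : ℕ) % s j)).card : ℝ) ≤ (L : ℝ) := by
                  exact_mod_cast this
                exact mul_le_mul_of_nonneg_right hcast (by positivity)
            _ = (L : ℝ) * ∑ m ∈ D, ‖(x m)‖ := by rw [Finset.mul_sum]
            _ ≤ (L : ℝ) * W := by
                refine mul_le_mul_of_nonneg_left ?_ (by positivity)
                exact Finset.sum_le_sum_of_subset_of_nonneg (Finset.erase_subset _ _)
                  (fun m _ _ => by positivity)
        have h4 : (Ls.card : ℝ) * W / ((k : ℝ) * e) ≤ (L : ℝ) * W := by
          rw [mul_div_assoc]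
          exact le_trans h1 (le_trans h2 h3)
        have h5 : (Ls.card : ℝ) * W ≤ (L : ℝ) * ((k : ℝ) * e) * W := by
          have := (div_le_iff₀ hkepos).mp h4
          nlinarith
        have h6 : (Ls.card : ℝ) ≤ (L : ℝ) * ((k : ℝ) * e) :=
          le_of_mul_le_mul_right (by linarith) hWpos
        have : (Ls.card : ℝ) ≤ ((k * e) * L : ℕ) := by push_cast; nlinarith
        exact_mod_cast this
    calc (univ.filter (fun j => ¬ Good n j)).card ≤ (Hs ∪ Ls).card :=
          Finset.card_le_card hsubset
    _ ≤ Hs.card + Ls.card := Finset.card_union_le _ _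
    _ ≤ (k * e) * L + (k * e) * L := Nat.add_le_add hHcard hLcard
    _ = 2 * (k * e) * L := by ring
  -- pigeonhole: a good modulus for most of S'
  have hpick : ∀ S' : Finset (Fin N), S'.Nonempty →
      ∃ j : Fin K, c * (S'.filter (fun n => ¬ Good n j)).card + 1 ≤ 2 * S'.card := by
    intro S' hS'
    have hKuniv : (univ : Finset (Fin K)).Nonempty := ⟨⟨0, hK⟩, mem_univ _⟩
    obtain ⟨j, hjmem, hjmin⟩ := Finset.exists_min_image univ
      (fun j => (S'.filter (fun n => ¬ Good n j)).card) hKuniv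
    set g : Fin K → ℕ := fun j => (S'.filter (fun n => ¬ Good n j)).card with hg
    refine ⟨j, ?_⟩
    show c * g j + 1 ≤ 2 * S'.card
    have hsum : ∑ j' : Fin K, g j' ≤ S'.card * (2 * (k * e) * L) := by
      have hswap : ∑ j' : Fin K, g j'
          = ∑ n ∈ S', (univ.filter (fun j' => ¬ Good n j')).card := by
        simp only [hg, Finset.card_filter]
        rw [Finset.sum_comm]
      rw [hswap]
      calc ∑ n ∈ S', (univ.filter fun j' => ¬ Good n j').card
          ≤ ∑ n ∈ S', 2 * (k * e) * L := Finset.sum_le_sum (fun n _ => hbad n)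
      _ = S'.card * (2 * (k * e) * L) := by rw [Finset.sum_const, smul_eq_mul]
    have hmin : K * g j ≤ ∑ j' : Fin K, g j' := by
      have := Finset.card_nsmul_le_sum univ g (g j) (fun i _ => hjmin i (mem_univ i))
      simpa [Finset.card_univ, smul_eq_mul] using this
    have h7 : K * g j ≤ S'.card * (2 * (k * e) * L) := le_trans hmin hsum
    rcases Nat.eq_zero_or_pos (g j) with hgz | hg1
    · rw [hgz]
      have := hS'.card_pos
      omega
    · rcases Nat.eq_zero_or_pos ((k * e) * L) with hPz | hPpos
      · exfalso
        have h8 : 2 * (k * e) * L = 0 := by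
          rw [Nat.mul_assoc 2 (k * e) L, hPz]
        rw [h8, Nat.mul_zero] at h7
        have h9 := Nat.le_zero.mp h7
        rcases Nat.mul_eq_zero.mp h9 with h | h <;> omega
      · have hlt : c * g j * ((k * e) * L) < 2 * S'.card * ((k * e) * L) := by
          calc c * g j * ((k * e) * L)
              < c * g j * ((k * e) * L) + g j := Nat.lt_add_of_pos_right hg1
          _ = (c * (k * e) * L + 1) * g j := by ring
          _ = K * g j := by rw [hKdef]
          _ ≤ S'.card * (2 * (k * e) * L) := h7
          _ = 2 * S'.card * ((k * e) * L) := by ring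
        have := Nat.lt_of_mul_lt_mul_right hlt
        omega
  -- recursive construction of J
  set b : ℝ := (c : ℝ) / 2 with hb
  have hb2 : (2 : ℝ) ≤ b := by
    rw [hb]
    have : (4 : ℝ) ≤ (c : ℝ) := by exact_mod_cast hc
    linarith
  have hb1 : (1 : ℝ) < b := lt_of_lt_of_le one_lt_two hb2
  have hb0 : (0 : ℝ) < b := lt_trans one_pos hb1
  have main : ∀ n : ℕ, ∀ S' : Finset (Fin N), S'.card ≤ n →
      ∃ J : Finset (Fin K), (∀ a ∈ S', ∃ j ∈ J, Good a j) ∧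
        (J = ∅ ∨ b ^ J.card ≤ b * S'.card) := by
    intro n
    induction n with
    | zero =>
      intro S' hS'
      have hS'e : S' = ∅ := Finset.card_eq_zero.mp (Nat.le_zero.mp hS')
      exact ⟨∅, by simp [hS'e], Or.inl rfl⟩
    | succ n ih =>
      intro S' hS'
      rcases Finset.eq_empty_or_nonempty S' with rfl | hne
      · exact ⟨∅, by simp, Or.inl rfl⟩
      obtain ⟨j, hj⟩ := hpick S' hne
      set S'' := S'.filter (fun n => ¬ Good n j) with hS''
      have hcard : S''.card < S'.card := by
        have h4 : 4 * S''.card ≤ c * S''.card := Nat.mul_le_mul_right _ hc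
        omega
      obtain ⟨J', hJcov, hJbd⟩ := ih S'' (by omega)
      refine ⟨insert j J', ?_, ?_⟩
      · intro a ha
        by_cases hga : Good a j
        · exact ⟨j, mem_insert_self _ _, hga⟩
        · obtain ⟨j', hj', hgj'⟩ := hJcov a (Finset.mem_filter.mpr ⟨ha, hga⟩)
          exact ⟨j', mem_insert_of_mem hj', hgj'⟩
      · right
        have hcins : (insert j J').card ≤ J'.card + 1 := Finset.card_insert_le _ _
        have hpow : b ^ (insert j J').card ≤ b ^ (J'.card + 1) :=
          pow_le_pow_right₀ (le_of_lt hb1) hcins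
        have hS1 : (1 : ℝ) ≤ (S'.card : ℝ) := by exact_mod_cast hne.card_pos
        rcases hJbd with rfl | hJbd
        · calc b ^ (insert j (∅ : Finset (Fin K))).card ≤ b ^ (0 + 1) := hpow
          _ = b := by ring
          _ ≤ b * S'.card := by nlinarith
        · have hstep : (c : ℝ) * S''.card ≤ 2 * S'.card := by
            have hnat : c * S''.card ≤ 2 * S'.card := by omega
            exact_mod_cast hnat
          have hmid : b * (S''.card : ℝ) ≤ (S'.card : ℝ) := by
            rw [hb]; linarith
          calc b ^ (insert j J').card ≤ b ^ (J'.card + 1) := hpow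
          _ = b ^ J'.card * b := by ring
          _ ≤ (b * S''.card) * b := mul_le_mul_of_nonneg_right hJbd (le_of_lt hb0)
          _ = b * (b * S''.card) := by ring
          _ ≤ b * S'.card := mul_le_mul_of_nonneg_left hmid (le_of_lt hb0)
  obtain ⟨J, hcov, hbd⟩ := main S.card S le_rfl
  refine ⟨J, ?_, fun n hn => ?_⟩
  · rcases hbd with rfl | hbd
    · simp
    · rcases Nat.eq_zero_or_pos J.card with h0 | hpos
      · simp [h0]
      · obtain ⟨r, hr⟩ : ∃ r, J.card = r + 1 := ⟨J.card - 1, by omega⟩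
        rw [hr]
        have hbr : b ^ r ≤ (S.card : ℝ) := by
          have hh : b ^ r * b ≤ b * (S.card : ℝ) := by
            rw [← pow_succ, ← hr]; exact hbd
          nlinarith
        have hlt : (r : ℝ) < Real.log ((S.card : ℝ) + 1) / Real.log b := by
          rw [lt_div_iff₀ (Real.log_pos hb1)]
          have hlog : Real.log (b ^ r) < Real.log ((S.card : ℝ) + 1) :=
            Real.log_lt_log (by positivity) (by linarith)
          rwa [Real.log_pow] at hlog
        have := Nat.lt_ceil.mpr hlt
        omega
  · obtain ⟨j, hjJ, hgood⟩ := hcov n hn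
    exact ⟨j, hjJ, hgood⟩
end
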